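/- Let T = (T₁, r₁) ∘ (T₂, r₂) with root r = r₁. Suppose f : V(T) → {0,1,2} with f(r₁) = f(r₂) = 0, f restricted to T₁ − r₁ is an IR2DF of T₁ − r₁ with f(N_{T₁}[r₁]) = 0 (so f|_{T₁} is not an IR2DF of T₁), and f|_{T₂} is an IR2DF of T₂ with f(r₂) = 0. Then f is not an IR2DF of T, f(N_T[r]) = 0, and f restricted to T − r is an IR2DF of T − r. -/

import Mathlib

/-!
Since `f` vanishes on `N_{T₁}[r₁]` and at `r₂`, it vanishes on `N_T[r]`, so the root is not
Roman {2}-dominated in `T`. Deleting `r` leaves `T₁ - r₁` and `T₂` side by side with no edge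
between them, and every IR2DF condition only involves a vertex and its neighbours, so each one
holds in `T - r` because it holds in the part containing that vertex.
-/

open scoped Classical

open Finset

noncomputable def nbrSum {V : Type*} [Fintype V] (G : SimpleGraph V) (f : V → ℕ) (v : V) : ℕ :=
  ∑ u ∈ Finset.univ.filter (fun u => G.Adj v u), f u

/-- `f(N[v])`: sum of `f` over the closed neighborhood of `v`. -/
noncomputable def closedNbrSum {V : Type*} [Fintype V] (G : SimpleGraph V) (f : V → ℕ) (v : V) : ℕ :=
  f v + nbrSum G f v

def IsR2DF {V : Type*} [Fintype V] (G : SimpleGraph V) (f : V → ℕ) : Prop :=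
  (∀ v, f v ≤ 2) ∧ ∀ v, f v = 0 → 2 ≤ nbrSum G f v

/-- `f` is an independent Roman {2}-dominating function on `G`. -/
def IsIR2DF {V : Type*} [Fintype V] (G : SimpleGraph V) (f : V → ℕ) : Prop :=
  IsR2DF G f ∧ ∀ ⦃u v : V⦄, G.Adj u v → f u = 0 ∨ f v = 0

/-- One-directional relation generating the composition `(T₁,r₁) ∘ (T₂,r₂)`. -/
def treeCompRel {V₁ V₂ : Type*} (T₁ : SimpleGraph V₁) (T₂ : SimpleGraph V₂) (r₁ : V₁) (r₂ : V₂) :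
    (V₁ ⊕ V₂) → (V₁ ⊕ V₂) → Prop
  | .inl a, .inl b => T₁.Adj a b
  | .inr a, .inr b => T₂.Adj a b
  | .inl a, .inr b => a = r₁ ∧ b = r₂
  | .inr _, .inl _ => False

/-- The composition `(T₁,r₁) ∘ (T₂,r₂)`: disjoint union plus the edge `r₁r₂`. -/
def compGraph {V₁ V₂ : Type*} (T₁ : SimpleGraph V₁) (T₂ : SimpleGraph V₂) (r₁ : V₁) (r₂ : V₂) :
    SimpleGraph (V₁ ⊕ V₂) :=
  SimpleGraph.fromRel (treeCompRel T₁ T₂ r₁ r₂)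

/-- The graph `G - r` obtained by deleting the vertex `r`. -/
def delVert {V : Type*} (G : SimpleGraph V) (r : V) : SimpleGraph {v : V // v ≠ r} :=
  SimpleGraph.induce {v : V | v ≠ r} G

section LocalConditions

variable {V W : Type*} [Fintype V] [Fintype W]

lemma nbrSum_eq_zero_iff (G : SimpleGraph V) (f : V → ℕ) (v : V) :
    nbrSum G f v = 0 ↔ ∀ u, G.Adj v u → f u = 0 := by
  simp [nbrSum, Finset.sum_eq_zero_iff]

lemma closedNbrSum_eq_zero_iff (G : SimpleGraph V) (f : V → ℕ) (v : V) :
    closedNbrSum G f v = 0 ↔ f v = 0 ∧ ∀ u, G.Adj v u → f u = 0 := by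
  rw [closedNbrSum, Nat.add_eq_zero_iff, nbrSum_eq_zero_iff]

lemma not_isIR2DF_of_closedNbrSum_eq_zero {G : SimpleGraph V} {f : V → ℕ} {v : V}
    (h : closedNbrSum G f v = 0) : ¬ IsIR2DF G f := by
  rintro ⟨⟨-, hdom⟩, -⟩
  have hv := hdom v (Nat.eq_zero_of_add_eq_zero_right h)
  rw [closedNbrSum] at h
  omega

lemma nbrSum_embedding_apply {G : SimpleGraph W} {G' : SimpleGraph V} (φ : G ↪g G')
    (g : V → ℕ) {w : W} (hφ : ∀ v, G'.Adj (φ w) v → v ∈ Set.range φ) :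
    nbrSum G' g (φ w) = nbrSum G (g ∘ φ) w := by
  have hnbrs : (Finset.univ.filter (G.Adj w)).map φ.toEmbedding
      = Finset.univ.filter (G'.Adj (φ w)) := by
    ext v
    simp only [Finset.mem_map, Finset.mem_filter, Finset.mem_univ, true_and]
    constructor
    · rintro ⟨u, hu, rfl⟩
      exact φ.map_rel_iff.mpr hu
    · intro hv
      obtain ⟨u, rfl⟩ := hφ v hv
      exact ⟨u, φ.map_rel_iff.mp hv, rfl⟩
  rw [nbrSum, nbrSum, ← hnbrs, Finset.sum_map]
  rfl

def IsIR2DFAt (G : SimpleGraph V) (f : V → ℕ) (v : V) : Prop :=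
  f v ≤ 2 ∧ (f v = 0 → 2 ≤ nbrSum G f v) ∧ ∀ u, G.Adj v u → f v = 0 ∨ f u = 0

lemma isIR2DF_iff_forall_isIR2DFAt (G : SimpleGraph V) (f : V → ℕ) :
    IsIR2DF G f ↔ ∀ v, IsIR2DFAt G f v := by
  simp only [IsIR2DF, IsR2DF, IsIR2DFAt]
  exact ⟨fun ⟨⟨hb, hdom⟩, hind⟩ v => ⟨hb v, hdom v, fun _ h => hind h⟩,
    fun h => ⟨⟨fun v => (h v).1, fun v => (h v).2.1⟩, fun u v huv => (h u).2.2 v huv⟩⟩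

lemma IsIR2DFAt.map {G : SimpleGraph W} {G' : SimpleGraph V} {f : V → ℕ} {w : W}
    (φ : G ↪g G') (hφ : ∀ v, G'.Adj (φ w) v → v ∈ Set.range φ)
    (h : IsIR2DFAt G (f ∘ φ) w) : IsIR2DFAt G' f (φ w) := by
  obtain ⟨hb, hdom, hind⟩ := h
  refine ⟨hb, fun h0 => nbrSum_embedding_apply φ f hφ ▸ hdom h0, fun v hv => ?_⟩
  obtain ⟨u, rfl⟩ := hφ v hv
  exact hind u (φ.map_rel_iff.mp hv)

end LocalConditions

section Composition

variable {V₁ V₂ : Type*} {T₁ : SimpleGraph V₁} {T₂ : SimpleGraph V₂} {r₁ : V₁} {r₂ : V₂}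

@[simp]
lemma compGraph_adj_inl_inl {a b : V₁} :
    (compGraph T₁ T₂ r₁ r₂).Adj (.inl a) (.inl b) ↔ T₁.Adj a b := by
  simp only [compGraph, SimpleGraph.fromRel_adj, ne_eq, Sum.inl.injEq, treeCompRel,
    T₁.adj_comm b a, or_self, and_iff_right_iff_imp]
  exact fun h => h.ne

@[simp]
lemma compGraph_adj_inr_inr {a b : V₂} :
    (compGraph T₁ T₂ r₁ r₂).Adj (.inr a) (.inr b) ↔ T₂.Adj a b := by
  simp only [compGraph, SimpleGraph.fromRel_adj, ne_eq, Sum.inr.injEq, treeCompRel,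
    T₂.adj_comm b a, or_self, and_iff_right_iff_imp]
  exact fun h => h.ne

@[simp]
lemma compGraph_adj_inl_inr {a : V₁} {b : V₂} :
    (compGraph T₁ T₂ r₁ r₂).Adj (.inl a) (.inr b) ↔ a = r₁ ∧ b = r₂ := by
  simp [compGraph, treeCompRel]

@[simp]
lemma compGraph_adj_inr_inl {a : V₂} {b : V₁} :
    (compGraph T₁ T₂ r₁ r₂).Adj (.inr a) (.inl b) ↔ b = r₁ ∧ a = r₂ := by
  rw [SimpleGraph.adj_comm, compGraph_adj_inl_inr]

variable (T₁ T₂ r₁ r₂)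

def inlDelVertEmbedding : delVert T₁ r₁ ↪g delVert (compGraph T₁ T₂ r₁ r₂) (.inl r₁) where
  toFun a := ⟨.inl a.1, by simpa using a.2⟩
  inj' _ _ h := Subtype.ext (Sum.inl_injective (congrArg Subtype.val h))
  map_rel_iff' := compGraph_adj_inl_inl

def inrDelVertEmbedding : T₂ ↪g delVert (compGraph T₁ T₂ r₁ r₂) (.inl r₁) where
  toFun b := ⟨.inr b, Sum.inr_ne_inl⟩
  inj' _ _ h := Sum.inr_injective (congrArg Subtype.val h)
  map_rel_iff' := compGraph_adj_inr_inr

lemma inlDelVertEmbedding_adj_mem_range (a : {v : V₁ // v ≠ r₁})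
    (v : {x : V₁ ⊕ V₂ // x ≠ .inl r₁})
    (hv : (delVert (compGraph T₁ T₂ r₁ r₂) (.inl r₁)).Adj (inlDelVertEmbedding T₁ T₂ r₁ r₂ a) v) :
    v ∈ Set.range (inlDelVertEmbedding T₁ T₂ r₁ r₂) := by
  obtain ⟨b | b, hb⟩ := v
  · exact ⟨⟨b, fun h => hb (h ▸ rfl)⟩, rfl⟩
  · exact absurd (compGraph_adj_inl_inr.mp hv).1 a.2

lemma inrDelVertEmbedding_adj_mem_range (a : V₂) (v : {x : V₁ ⊕ V₂ // x ≠ .inl r₁})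
    (hv : (delVert (compGraph T₁ T₂ r₁ r₂) (.inl r₁)).Adj (inrDelVertEmbedding T₁ T₂ r₁ r₂ a) v) :
    v ∈ Set.range (inrDelVertEmbedding T₁ T₂ r₁ r₂) := by
  obtain ⟨b | b, hb⟩ := v
  · exact absurd (congrArg Sum.inl (compGraph_adj_inr_inl.mp hv).1) hb
  · exact ⟨b, rfl⟩

end Composition

theorem stmt_9_general {V₁ V₂ : Type*} [Fintype V₁] [Fintype V₂] [DecidableEq V₁] [DecidableEq V₂]
    (T₁ : SimpleGraph V₁) (T₂ : SimpleGraph V₂) (r₁ : V₁) (r₂ : V₂)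
    (f : V₁ ⊕ V₂ → ℕ) (h0' : f (Sum.inr r₂) = 0)
    (hdel₁ : IsIR2DF (delVert T₁ r₁) (fun v => f (Sum.inl v.1)))
    (hN₁ : closedNbrSum T₁ (fun v => f (Sum.inl v)) r₁ = 0)
    (hf₂ : IsIR2DF T₂ (fun v => f (Sum.inr v))) :
    ¬ IsIR2DF (compGraph T₁ T₂ r₁ r₂) f ∧
      closedNbrSum (compGraph T₁ T₂ r₁ r₂) f (Sum.inl r₁) = 0 ∧
      IsIR2DF (delVert (compGraph T₁ T₂ r₁ r₂) (Sum.inl r₁)) (fun v => f v.1) := by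
  have hroot : closedNbrSum (compGraph T₁ T₂ r₁ r₂) f (Sum.inl r₁) = 0 := by
    obtain ⟨hr₁, hnbr⟩ := (closedNbrSum_eq_zero_iff _ _ _).mp hN₁
    refine (closedNbrSum_eq_zero_iff _ _ _).mpr ⟨hr₁, ?_⟩
    rintro (u | u) hu
    · exact hnbr u (compGraph_adj_inl_inl.mp hu)
    · rwa [(compGraph_adj_inl_inr.mp hu).2]
  refine ⟨not_isIR2DF_of_closedNbrSum_eq_zero hroot, hroot, ?_⟩
  rw [isIR2DF_iff_forall_isIR2DFAt] at hdel₁ hf₂ ⊢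
  rintro ⟨u | u, hu⟩
  · exact IsIR2DFAt.map (f := f ∘ Subtype.val) _
      (inlDelVertEmbedding_adj_mem_range T₁ T₂ r₁ r₂ _) (hdel₁ ⟨u, fun h => hu (h ▸ rfl)⟩)
  · exact IsIR2DFAt.map (f := f ∘ Subtype.val) _
      (inrDelVertEmbedding_adj_mem_range T₁ T₂ r₁ r₂ u) (hf₂ u)

theorem stmt_9 {V₁ V₂ : Type*} [Fintype V₁] [Fintype V₂] [DecidableEq V₁] [DecidableEq V₂]
    (T₁ : SimpleGraph V₁) (T₂ : SimpleGraph V₂) (hT₁ : T₁.IsTree) (hT₂ : T₂.IsTree)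
    (r₁ : V₁) (r₂ : V₂)
    (f : V₁ ⊕ V₂ → ℕ) (hb : ∀ x, f x ≤ 2)
    (h0 : f (Sum.inl r₁) = 0) (h0' : f (Sum.inr r₂) = 0)
    (hdel₁ : IsIR2DF (delVert T₁ r₁) (fun v => f (Sum.inl v.1)))
    (hN₁ : closedNbrSum T₁ (fun v => f (Sum.inl v)) r₁ = 0)
    (hnot₁ : ¬ IsIR2DF T₁ (fun v => f (Sum.inl v)))
    (hf₂ : IsIR2DF T₂ (fun v => f (Sum.inr v))) :
    ¬ IsIR2DF (compGraph T₁ T₂ r₁ r₂) f ∧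
      closedNbrSum (compGraph T₁ T₂ r₁ r₂) f (Sum.inl r₁) = 0 ∧
      IsIR2DF (delVert (compGraph T₁ T₂ r₁ r₂) (Sum.inl r₁)) (fun v => f v.1) :=
  stmt_9_general T₁ T₂ r₁ r₂ f h0' hdel₁ hN₁ hf₂
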